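/- arXiv:1507.07273 — 4 statements merged into one kernel-verified Lean document; each statement's English description precedes it below -/
import Mathlib

section
/- Let B be the bilinear form on ℚ² with Gram matrix [[-2,4],[4,-2]] and C₁=(1,0), C₂=(0,1). For every pair of nonnegative integers (m,n), there exist P, N ∈ ℤ² with nonnegative coordinates such that P + N = (m,n), B(P,C₁) ≥ 0, B(P,C₂) ≥ 0, B(P,N) = 0, and either N = 0 or B(N,N) < 0. -/
/-- The intersection form with Gram matrix [[-2,4],[4,-2]] on ℚ². -/
def Bq (x y : ℚ × ℚ) : ℚ :=
  -2 * x.1 * y.1 + 4 * x.1 * y.2 + 4 * x.2 * y.1 - 2 * x.2 * y.2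

theorem stmt5 (m n : ℤ) (hm : 0 ≤ m) (hn : 0 ≤ n) :
    ∃ P N : ℤ × ℤ, 0 ≤ P.1 ∧ 0 ≤ P.2 ∧ 0 ≤ N.1 ∧ 0 ≤ N.2 ∧
      P + N = (m, n) ∧
      Bq ((P.1 : ℚ), (P.2 : ℚ)) (1, 0) ≥ 0 ∧
      Bq ((P.1 : ℚ), (P.2 : ℚ)) (0, 1) ≥ 0 ∧
      Bq ((P.1 : ℚ), (P.2 : ℚ)) ((N.1 : ℚ), (N.2 : ℚ)) = 0 ∧
      (N = 0 ∨ Bq ((N.1 : ℚ), (N.2 : ℚ)) ((N.1 : ℚ), (N.2 : ℚ)) < 0) := by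
  rcases lt_or_ge (2 * m) n with h | h
  · -- n > 2m : P = (m, 2m), N = (0, n - 2m)
    refine ⟨(m, 2 * m), (0, n - 2 * m), hm, by simp; linarith, le_refl 0, by simp; linarith,
      by simp [Prod.ext_iff], ?_, ?_, ?_, Or.inr ?_⟩
    · simp only [Bq]; push_cast
      have : (0:ℚ) ≤ (m:ℚ) := by exact_mod_cast hm
      nlinarith
    · simp only [Bq]; push_cast
      have : (0:ℚ) ≤ (m:ℚ) := by exact_mod_cast hm
      nlinarith
    · simp only [Bq]; push_cast; ring
    · simp only [Bq]; push_cast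
      have : (0:ℚ) < (n : ℚ) - 2 * m := by exact_mod_cast (by linarith : (0:ℤ) < n - 2 * m)
      nlinarith
  rcases lt_or_ge (2 * n) m with h2 | h2
  · -- m > 2n : P = (2n, n), N = (m - 2n, 0)
    refine ⟨(2 * n, n), (m - 2 * n, 0), by simp; linarith, hn, by simp; linarith, le_refl 0,
      by simp [Prod.ext_iff], ?_, ?_, ?_, Or.inr ?_⟩
    · simp only [Bq]; push_cast
      have : (0:ℚ) ≤ (n:ℚ) := by exact_mod_cast hn
      nlinarith
    · simp only [Bq]; push_cast
      have : (0:ℚ) ≤ (n:ℚ) := by exact_mod_cast hn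
      nlinarith
    · simp only [Bq]; push_cast; ring
    · simp only [Bq]; push_cast
      have : (0:ℚ) < (m : ℚ) - 2 * n := by exact_mod_cast (by linarith : (0:ℤ) < m - 2 * n)
      nlinarith
  · -- nef case: P = (m, n), N = 0
    refine ⟨(m, n), 0, hm, hn, le_refl 0, le_refl 0, by simp, ?_, ?_, ?_, Or.inl rfl⟩
    · simp only [Bq]; push_cast
      have hq : (m:ℚ) ≤ 2 * n := by exact_mod_cast h2
      linarith
    · simp only [Bq]; push_cast
      have hq : (n:ℚ) ≤ 2 * m := by exact_mod_cast h
      linarith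
    · simp [Bq]
end

section
/- Let B be the bilinear form on ℚ² with Gram matrix [[-2,4],[4,-2]]. Suppose D ∈ ℤ² has nonnegative coordinates and D = P + N with P, N ∈ ℚ², where B(P,C₁) ≥ 0, B(P,C₂) ≥ 0, N is a nonnegative rational linear combination of C₁ and C₂, B(P,N) = 0, and the support of N (the set of Cᵢ appearing with positive coefficient in N) spans a negative definite sublattice. Then P and N have integer coordinates. -/
/-!
Two distinct curves `C₁`, `C₂` have `(C₁ + C₂)² = 4 > 0`, so a negative definite support of `N`
consists of at most one curve `C`, and `N = c • C`. Orthogonality `P · C = 0` with `P = D - c • C`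
forces `c = (D · C) / C² = -(D · C) / 2`, an integer because the form is even.
Swapping coordinates preserves the form and exchanges `C₁` and `C₂`.
-/

lemma Bq_add_right (x y z : ℚ × ℚ) : Bq x (y + z) = Bq x y + Bq x z := by
  simp only [Bq, Prod.fst_add, Prod.snd_add]
  ring

lemma Bq_smul_right (x y : ℚ × ℚ) (c : ℚ) : Bq x (c • y) = c * Bq x y := by
  simp only [Bq, Prod.smul_fst, Prod.smul_snd, smul_eq_mul]
  ring

lemma Bq_swap (x y : ℚ × ℚ) : Bq x.swap y.swap = Bq x y := by
  simp only [Bq, Prod.fst_swap, Prod.snd_swap]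
  ring

lemma eq_zero_or_eq_zero_of_negDef {c₁ c₂ : ℚ}
    (hnegdef : ∀ a b : ℚ, (c₁ = 0 → a = 0) → (c₂ = 0 → b = 0) →
      (a, b) ≠ ((0 : ℚ), (0 : ℚ)) → Bq (a, b) (a, b) < 0) :
    c₁ = 0 ∨ c₂ = 0 := by
  by_contra! h
  have := hnegdef 1 1 (absurd · h.1) (absurd · h.2) (by norm_num)
  norm_num [Bq] at this

lemma exists_int_of_add_single {P : ℚ × ℚ} {c : ℚ} {m n : ℤ}
    (hsum : P + (c, 0) = ((m : ℚ), (n : ℚ))) (horth : c * Bq P (1, 0) = 0) :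
    (∃ p q : ℤ, P = ((p : ℚ), (q : ℚ))) ∧ (∃ p q : ℤ, ((c, 0) : ℚ × ℚ) = ((p : ℚ), (q : ℚ))) := by
  obtain ⟨h₁, h₂⟩ := Prod.ext_iff.mp hsum
  simp only [Prod.fst_add, Prod.snd_add, add_zero] at h₁ h₂
  rcases mul_eq_zero.mp horth with rfl | horth
  · exact ⟨⟨m, n, Prod.ext (by simpa using h₁) h₂⟩, ⟨0, 0, by simp⟩⟩
  · have hc : c = ((m - 2 * n : ℤ) : ℚ) := by
      simp only [Bq] at horth
      push_cast
      linarith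
    refine ⟨⟨2 * n, n, Prod.ext ?_ h₂⟩, ⟨m - 2 * n, 0, by simp [hc]⟩⟩
    push_cast at hc ⊢
    linarith

theorem stmt6_general (m n : ℤ)
    (P N : ℚ × ℚ) (hsum : P + N = ((m : ℚ), (n : ℚ)))
    (c₁ c₂ : ℚ)
    (hN : N = c₁ • ((1 : ℚ), (0 : ℚ)) + c₂ • ((0 : ℚ), (1 : ℚ)))
    (hPN : Bq P N = 0)
    (hnegdef : ∀ a b : ℚ, (c₁ = 0 → a = 0) → (c₂ = 0 → b = 0) →
      (a, b) ≠ ((0 : ℚ), (0 : ℚ)) → Bq (a, b) (a, b) < 0) :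
    (∃ p q : ℤ, P = ((p : ℚ), (q : ℚ))) ∧ (∃ p q : ℤ, N = ((p : ℚ), (q : ℚ))) := by
  rw [hN, Bq_add_right, Bq_smul_right, Bq_smul_right] at hPN
  rcases eq_zero_or_eq_zero_of_negDef hnegdef with rfl | rfl
  · have hN' : N = (c₂, 0).swap := by simp [hN]
    rw [zero_mul, zero_add, ← Bq_swap] at hPN
    have hsum' : P.swap + (c₂, 0) = ((n : ℚ), (m : ℚ)) := by
      simpa [hN'] using congrArg Prod.swap hsum
    obtain ⟨⟨p, q, hP⟩, ⟨p', q', hc⟩⟩ := exists_int_of_add_single hsum' hPN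
    exact ⟨⟨q, p, by rw [← Prod.swap_swap P, hP]; rfl⟩, ⟨q', p', by rw [hN', hc]; rfl⟩⟩
  · have hN' : N = (c₁, 0) := by simp [hN]
    rw [zero_mul, add_zero] at hPN
    rw [hN'] at hsum ⊢
    exact exists_int_of_add_single hsum hPN

theorem stmt6 (m n : ℤ) (hm : 0 ≤ m) (hn : 0 ≤ n)
    (P N : ℚ × ℚ) (hsum : P + N = ((m : ℚ), (n : ℚ)))
    (hP1 : Bq P (1, 0) ≥ 0) (hP2 : Bq P (0, 1) ≥ 0)
    (c₁ c₂ : ℚ) (hc₁ : 0 ≤ c₁) (hc₂ : 0 ≤ c₂)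
    (hN : N = c₁ • ((1 : ℚ), (0 : ℚ)) + c₂ • ((0 : ℚ), (1 : ℚ)))
    (hPN : Bq P N = 0)
    (hnegdef : ∀ a b : ℚ, (c₁ = 0 → a = 0) → (c₂ = 0 → b = 0) →
      (a, b) ≠ ((0 : ℚ), (0 : ℚ)) → Bq (a, b) (a, b) < 0) :
    (∃ p q : ℤ, P = ((p : ℚ), (q : ℚ))) ∧ (∃ p q : ℤ, N = ((p : ℚ), (q : ℚ))) :=
  stmt6_general m n P N hsum c₁ c₂ hN hPN hnegdef
end

section
/- In the lattice ℤ³ with basis H, E₁, E₂ and bilinear form determined by H² = 1, E₁² = E₂² = -1, H·E₁ = H·E₂ = E₁·E₂ = 0, let E = E₁ - E₂ and D = 3H - E₁ - 2E₂. Setting P = (6(H - E₁) + 3E)/2 and N = E/2 in ℚ³, one has: D = P + N, P·E = 0, P·(H - E₁) ≥ 0, N·N = -1/2, and N does not lie in ℤ³. -/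
/-- Intersection form on the Picard lattice of the blow up of ℙ² at two points:
H² = 1, E₁² = E₂² = -1, mixed products zero. -/
def ip3 (x y : ℚ × ℚ × ℚ) : ℚ :=
  x.1 * y.1 - x.2.1 * y.2.1 - x.2.2 * y.2.2

theorem stmt11 :
    let H : ℚ × ℚ × ℚ := (1, 0, 0)
    let E₁ : ℚ × ℚ × ℚ := (0, 1, 0)
    let E₂ : ℚ × ℚ × ℚ := (0, 0, 1)
    let E : ℚ × ℚ × ℚ := E₁ - E₂
    let D : ℚ × ℚ × ℚ := (3 : ℚ) • H - E₁ - (2 : ℚ) • E₂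
    let P : ℚ × ℚ × ℚ := ((1 : ℚ) / 2) • ((6 : ℚ) • (H - E₁) + (3 : ℚ) • E)
    let N : ℚ × ℚ × ℚ := ((1 : ℚ) / 2) • E
    D = P + N ∧ ip3 P E = 0 ∧ ip3 P (H - E₁) ≥ 0 ∧ ip3 N N = -1 / 2 ∧
      ¬ ∃ z : ℤ × ℤ × ℤ, N = ((z.1 : ℚ), (z.2.1 : ℚ), (z.2.2 : ℚ)) := by
  refine ⟨by norm_num [Prod.ext_iff], by norm_num [ip3], by norm_num [ip3], by norm_num [ip3], ?_⟩
  rintro ⟨z, hz⟩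
  simp only [Prod.ext_iff] at hz
  have h : (z.2.1 : ℚ) = 1/2 := by rw [← hz.2.1]; norm_num
  have : (2 : ℚ) * z.2.1 = 1 := by rw [h]; norm_num
  have h2 : (2 : ℤ) * z.2.1 = 1 := by exact_mod_cast this
  omega
end

section
/- Let B be the bilinear form on ℚ² with Gram matrix [[-2,4],[4,-2]] and let m ≥ n ≥ 0 be integers with m > 2n. Then the pair (P,N) = (n·(2,1), (m-2n)·(1,0)) is the unique pair of elements of ℚ² with nonnegative coordinates such that P + N = (m,n), B(P,C₁) ≥ 0, B(P,C₂) ≥ 0, N is a nonnegative rational multiple of C₁ or of C₂ or a combination with negative definite support, and B(P,C) = 0 for C ∈ {C₁,C₂} whenever C appears with positive coefficient in N. -/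
theorem stmt15 (m n : ℤ) (hmn : m ≥ n) (hn : n ≥ 0) (h : m > 2 * n) :
    ∀ P N : ℚ × ℚ,
      (0 ≤ P.1 ∧ 0 ≤ P.2 ∧ 0 ≤ N.1 ∧ 0 ≤ N.2 ∧
        P + N = ((m : ℚ), (n : ℚ)) ∧
        Bq P (1, 0) ≥ 0 ∧ Bq P (0, 1) ≥ 0 ∧
        (N.2 = 0 ∨ N.1 = 0 ∨ ∀ v : ℚ × ℚ, v ≠ 0 → Bq v v < 0) ∧
        (0 < N.1 → Bq P (1, 0) = 0) ∧ (0 < N.2 → Bq P (0, 1) = 0)) ↔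
      (P = (((2 * n : ℤ) : ℚ), ((n : ℤ) : ℚ)) ∧ N = (((m - 2 * n : ℤ) : ℚ), (0 : ℚ))) := by
  have hm' : (2 * (n:ℚ)) < (m:ℚ) := by exact_mod_cast h
  have hn' : (0:ℚ) ≤ (n:ℚ) := by exact_mod_cast hn
  intro P N
  constructor
  · rintro ⟨hP1, hP2, hN1, hN2, hsum, hB1, hB2, hsupp, hz1, hz2⟩
    have hs1 : P.1 + N.1 = (m:ℚ) := congrArg Prod.fst hsum
    have hs2 : P.2 + N.2 = (n:ℚ) := congrArg Prod.snd hsum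
    simp only [Bq] at hB1 hB2 hz1 hz2
    have hnd : ¬ ∀ v : ℚ × ℚ, v ≠ 0 → Bq v v < 0 := by
      intro hall
      have := hall (1,1) (by norm_num)
      simp [Bq] at this
      linarith
    have hcase : N.2 = 0 ∨ N.1 = 0 := by tauto
    have hN2z : N.2 = 0 := by
      rcases hcase with h2 | h1
      · exact h2
      · by_contra h2
        have h2' : 0 < N.2 := lt_of_le_of_ne hN2 (Ne.symm h2)
        have := hz2 h2'
        nlinarith
    have hP2n : P.2 = (n:ℚ) := by linarith
    have hN1pos : 0 < N.1 := by
      rcases lt_or_eq_of_le hN1 with hpos | heq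
      · exact hpos
      · exfalso
        have : P.1 = (m:ℚ) := by linarith
        nlinarith
    have hPe : P.1 = 2 * (n:ℚ) := by
      have := hz1 hN1pos
      nlinarith
    constructor
    · ext <;> push_cast <;> simp [hPe, hP2n]
    · ext <;> push_cast <;> [skip; skip] <;> first
        | (show N.1 = (m:ℚ) - 2*(n:ℚ); linarith)
        | (show N.2 = 0; linarith)
  · rintro ⟨hP, hN⟩
    subst hP hN
    push_cast
    refine ⟨by linarith, by linarith, by linarith, by norm_num, by simp [Prod.ext_iff], ?_, ?_, Or.inl rfl, ?_, ?_⟩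
    · simp [Bq]; ring_nf; exact le_refl _
    · simp [Bq]; nlinarith
    · intro _; simp [Bq]; ring
    · intro hc; norm_num at hc
end
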